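/- For every PCP instance (W, W') with mailbox encoding N = Enc(W,W'), the instance has a solution if and only if the mailbox trace set of N is nonempty: (W,W') has a solution ⟺ τ(S_mb(N)) ≠ ∅. -/

import Mathlib

/-- A message with sender, receiver and payload. -/
structure Msg (P A : Type) where
  sender : P
  receiver : P
  payload : A
deriving DecidableEq

/-- Actions: send `!m` or receive `?m`. -/
inductive Act (P A : Type) where
  | send : Msg P A → Act P A
  | recv : Msg P A → Act P A
deriving DecidableEq

namespace Act
variable {P A : Type}
def msg : Act P A → Msg P A | send m => m | recv m => m
def isSend : Act P A → Bool | send _ => true | recv _ => false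
/-- The active participant of an action. -/
def active : Act P A → P | send m => m.sender | recv m => m.receiver
end Act

section Defs
variable {P A : Type}

/-- Projection onto send actions `w↓_!`. -/
def projOut (w : List (Act P A)) : List (Act P A) := w.filter Act.isSend
/-- Projection onto receive actions `w↓_?`. -/
def projIn (w : List (Act P A)) : List (Act P A) := w.filter (fun a => !a.isSend)
/-- Erase the `!`/`?` marks: `w↓_msg`. -/
def projMsg (w : List (Act P A)) : List (Msg P A) := w.map Act.msg
/-- Projection onto actions in which `p` is active: `w↓_p`. -/
def projPeer [DecidableEq P] (p : P) (w : List (Act P A)) : List (Act P A) :=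
  w.filter (fun a => decide (a.active = p))
/-- Projection onto actions involving only participants in `{p, q}`. -/
def projPQ [DecidableEq P] (p q : P) (w : List (Act P A)) : List (Act P A) :=
  w.filter (fun a =>
    (decide (a.msg.sender = p) || decide (a.msg.sender = q)) &&
    (decide (a.msg.receiver = p) || decide (a.msg.receiver = q)))

/-- A network of communicating automata. -/
structure Network (P A : Type) where
  State : P → Type
  init : ∀ p, State p
  trans : ∀ p, State p → Act P A → State p → Prop
  final : ∀ p, Set (State p)
  Msgs : Set (Msg P A)

/-- Well-formedness: each automaton only performs actions in which it is active,
on messages of the network. -/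
def Network.WF (N : Network P A) : Prop :=
  ∀ p s a s', N.trans p s a s' → a.msg ∈ N.Msgs ∧ a.active = p

/-- The set of participants sending to `p`. -/
def senders (N : Network P A) (p : P) : Set P :=
  {q | ∃ m ∈ N.Msgs, m.sender = q ∧ m.receiver = p}

/-- Directed edge of the topology. -/
def Network.Edge (N : Network P A) (p q : P) : Prop :=
  ∃ m ∈ N.Msgs, m.sender = p ∧ m.receiver = q

/-- The underlying undirected topology graph. -/
def topoGraph (N : Network P A) : SimpleGraph P := SimpleGraph.fromRel N.Edge

/-- Tree topology: connected, acyclic, and every participant has at most one sender. -/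
def TreeTopo (N : Network P A) : Prop :=
  (topoGraph N).IsTree ∧ ∀ p, (senders N p).Subsingleton

/-- Generic multi-step relation labelled by words of actions. -/
inductive Steps {C : Type _} (step : C → Act P A → C → Prop) : C → List (Act P A) → C → Prop where
  | nil (c : C) : Steps step c [] c
  | cons {c c' c'' : C} {a : Act P A} {w : List (Act P A)} :
      step c a c' → Steps step c' w c'' → Steps step c (a :: w) c''

variable [DecidableEq P]

/-! ### Mailbox semantics -/

structure MbConfig (N : Network P A) where
  st : ∀ p, N.State p
  buf : P → List (Msg P A)

inductive MbStep (N : Network P A) : MbConfig N → Act P A → MbConfig N → Prop where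
  | send (c : MbConfig N) (m : Msg P A) (s' : N.State m.sender) :
      N.trans m.sender (c.st m.sender) (.send m) s' →
      MbStep N c (.send m)
        ⟨Function.update c.st m.sender s',
         Function.update c.buf m.receiver (c.buf m.receiver ++ [m])⟩
  | recv (c : MbConfig N) (m : Msg P A) (s' : N.State m.receiver) (rest : List (Msg P A)) :
      N.trans m.receiver (c.st m.receiver) (.recv m) s' →
      c.buf m.receiver = m :: rest →
      MbStep N c (.recv m)
        ⟨Function.update c.st m.receiver s',
         Function.update c.buf m.receiver rest⟩

def MbInit (N : Network P A) : MbConfig N := ⟨N.init, fun _ => []⟩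
def MbFinal (N : Network P A) (c : MbConfig N) : Prop := ∀ p, c.st p ∈ N.final p
def MbReachable (N : Network P A) (c : MbConfig N) : Prop :=
  ∃ w, Steps (MbStep N) (MbInit N) w c
def MbExecs (N : Network P A) : Set (List (Act P A)) :=
  {w | ∃ c, Steps (MbStep N) (MbInit N) w c ∧ MbFinal N c}
def MbTraces (N : Network P A) : Set (List (Act P A)) := projOut '' MbExecs N

/-! ### Peer-to-peer semantics -/

structure P2pConfig (N : Network P A) where
  st : ∀ p, N.State p
  buf : P → P → List (Msg P A)

inductive P2pStep (N : Network P A) : P2pConfig N → Act P A → P2pConfig N → Prop where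
  | send (c : P2pConfig N) (m : Msg P A) (s' : N.State m.sender) :
      N.trans m.sender (c.st m.sender) (.send m) s' →
      P2pStep N c (.send m)
        ⟨Function.update c.st m.sender s',
         Function.update c.buf m.sender
           (Function.update (c.buf m.sender) m.receiver (c.buf m.sender m.receiver ++ [m]))⟩
  | recv (c : P2pConfig N) (m : Msg P A) (s' : N.State m.receiver) (rest : List (Msg P A)) :
      N.trans m.receiver (c.st m.receiver) (.recv m) s' →
      c.buf m.sender m.receiver = m :: rest →
      P2pStep N c (.recv m)
        ⟨Function.update c.st m.receiver s',
         Function.update c.buf m.sender (Function.update (c.buf m.sender) m.receiver rest)⟩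

def P2pInit (N : Network P A) : P2pConfig N := ⟨N.init, fun _ _ => []⟩
def P2pExecs (N : Network P A) : Set (List (Act P A)) :=
  {w | ∃ c, Steps (P2pStep N) (P2pInit N) w c ∧ ∀ p, c.st p ∈ N.final p}
def P2pTraces (N : Network P A) : Set (List (Act P A)) := projOut '' P2pExecs N

/-! ### Synchronous semantics -/

inductive SyncStep (N : Network P A) : (∀ p, N.State p) → Act P A → (∀ p, N.State p) → Prop where
  | comm (st : ∀ p, N.State p) (m : Msg P A) (s1 : N.State m.sender) (s2 : N.State m.receiver) :
      N.trans m.sender (st m.sender) (.send m) s1 →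
      N.trans m.receiver (st m.receiver) (.recv m) s2 →
      SyncStep N st (.send m)
        (Function.update (Function.update st m.sender s1) m.receiver s2)

def SyncExecs (N : Network P A) : Set (List (Act P A)) :=
  {w | ∃ st, Steps (SyncStep N) N.init w st ∧ ∀ p, st p ∈ N.final p}
def SyncTraces (N : Network P A) : Set (List (Act P A)) := projOut '' SyncExecs N

/-! ### Local and influenced languages -/

inductive LocalPath (N : Network P A) (p : P) : N.State p → List (Act P A) → N.State p → Prop where
  | nil (s : N.State p) : LocalPath N p s [] s
  | cons {s s' s'' : N.State p} {a : Act P A} {w : List (Act P A)} :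
      N.trans p s a s' → LocalPath N p s' w s'' → LocalPath N p s (a :: w) s''

/-- The language `L(A_p)` of the automaton of participant `p`. -/
def LocalLang (N : Network P A) (p : P) : Set (List (Act P A)) :=
  {w | ∃ s, LocalPath N p (N.init p) w s ∧ s ∈ N.final p}

/-- `L` is the family of influenced languages `L_T(A_p)` of a tree-topology network. -/
def IsInfluenced (N : Network P A) (L : P → Set (List (Act P A))) : Prop :=
  (∀ p, senders N p = ∅ → L p = LocalLang N p) ∧
  (∀ p q, senders N p = {q} →
    L p = {w ∈ LocalLang N p | ∃ v ∈ L q, projMsg (projIn w) = projMsg (projOut v)})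

/-! ### Shuffles -/

/-- One swap replacing an adjacent `!x ?y` by `?y !x`. -/
inductive SwapStep : List (Act P A) → List (Act P A) → Prop where
  | swap (u v : List (Act P A)) (x y : Msg P A) :
      SwapStep (u ++ Act.send x :: Act.recv y :: v) (u ++ Act.recv y :: Act.send x :: v)

/-- `w' ⋈_? w`: `w'` is a valid input shuffle of `w`. -/
def ValidShuffle (w' w : List (Act P A)) : Prop := Relation.ReflTransGen SwapStep w w'

/-- The shuffled language `L_⋈(p)` of a language. -/
def ShuffleLang (Lp : Set (List (Act P A))) : Set (List (Act P A)) :=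
  {w' | ∃ w ∈ Lp, ValidShuffle w' w}

/-- Insert after each send action its matching receive action. -/
def withRecvs (w : List (Act P A)) : List (Act P A) :=
  w.flatMap fun a => match a with
    | .send m => [.send m, .recv m]
    | .recv m => [.recv m]

end Defs

/-! ### Encoding of the Post Correspondence Problem into a mailbox network -/

/-- The four participants of the encoding. -/
inductive PPart where
  | pI | pW | pW' | pL
deriving DecidableEq

/-- Payloads: indices, letters of the alphabet `Γ`, and the markers `$`, `end`, `ok`. -/
inductive Pay (Γ : Type) (n : ℕ) where
  | idx (i : Fin n)
  | letter (σ : Γ)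
  | dollar
  | endm
  | ok

/-- States of the automaton `A_I`. -/
inductive SI (n : ℕ) where
  | q0 | qi (i : Fin n) | qd | qd'

/-- States of the automata `A_W` and `A_W'`. -/
inductive SW (n : ℕ) where
  | q0 | mid (i : Fin n) (j : ℕ) | qf | qd | qe

/-- States of the automaton `A_L`. -/
inductive SL (Γ : Type) where
  | q0 | qa (σ : Γ) | qe | qe' | qok | qstar

/-- Transitions of `A_I`: it guesses a sequence of indices, sending each index first to `A_W`
then to `A_W'`, and finally the end markers `$`. -/
inductive ITrans (Γ : Type) (n : ℕ) : SI n → Act PPart (Pay Γ n) → SI n → Prop where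
  | sendW (i : Fin n) : ITrans Γ n .q0 (.send ⟨.pI, .pW, .idx i⟩) (.qi i)
  | sendW' (i : Fin n) : ITrans Γ n (.qi i) (.send ⟨.pI, .pW', .idx i⟩) .q0
  | dollarW : ITrans Γ n .q0 (.send ⟨.pI, .pW, .dollar⟩) .qd
  | dollarW' : ITrans Γ n .qd (.send ⟨.pI, .pW', .dollar⟩) .qd'

/-- Transitions of `A_W` (resp. `A_W'` with `self := pW'` and the word list `ws'`): receives an
index `i` from `A_I` and sends the letters of the `i`-th word to `A_L`, then on `$` sends `end`. -/
inductive WTrans (Γ : Type) (n : ℕ) (self : PPart) (ws : Fin n → List Γ) :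
    SW n → Act PPart (Pay Γ n) → SW n → Prop where
  | start (i : Fin n) : WTrans Γ n self ws .q0 (.recv ⟨.pI, self, .idx i⟩) (.mid i 0)
  | again (i : Fin n) : WTrans Γ n self ws .qf (.recv ⟨.pI, self, .idx i⟩) (.mid i 0)
  | step (i : Fin n) (j : ℕ) (h : j + 1 < (ws i).length) :
      WTrans Γ n self ws (.mid i j)
        (.send ⟨self, .pL, .letter ((ws i).get ⟨j, Nat.lt_of_succ_lt h⟩)⟩) (.mid i (j + 1))
  | last (i : Fin n) (j : ℕ) (h : j + 1 = (ws i).length) :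
      WTrans Γ n self ws (.mid i j)
        (.send ⟨self, .pL, .letter ((ws i).get ⟨j, Nat.lt_of_lt_of_eq (Nat.lt_succ_self j) h⟩)⟩)
        .qf
  | dollar : WTrans Γ n self ws .qf (.recv ⟨.pI, self, .dollar⟩) .qd
  | sendEnd : WTrans Γ n self ws .qd (.send ⟨self, .pL, .endm⟩) .qe

/-- Transitions of `A_L`: alternately matches a letter from `A_W` against the same letter from
`A_W'`, moves to the error sink `qstar` on any mismatch, and after both `end` markers sends
`ok` to `A_I` (which nobody ever receives), reaching the accepting state `qok`. -/
inductive LTrans (Γ : Type) (n : ℕ) : SL Γ → Act PPart (Pay Γ n) → SL Γ → Prop where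
  | getW (α : Γ) : LTrans Γ n .q0 (.recv ⟨.pW, .pL, .letter α⟩) (.qa α)
  | matchW' (α : Γ) : LTrans Γ n (.qa α) (.recv ⟨.pW', .pL, .letter α⟩) .q0
  | mismatch (α β : Γ) (h : β ≠ α) : LTrans Γ n (.qa α) (.recv ⟨.pW', .pL, .letter β⟩) .qstar
  | earlyEndW' (α : Γ) : LTrans Γ n (.qa α) (.recv ⟨.pW', .pL, .endm⟩) .qstar
  | wrongOrder (α : Γ) : LTrans Γ n .q0 (.recv ⟨.pW', .pL, .letter α⟩) .qstar
  | wrongOrderEnd : LTrans Γ n .q0 (.recv ⟨.pW', .pL, .endm⟩) .qstar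
  | doubleW (α β : Γ) : LTrans Γ n (.qa α) (.recv ⟨.pW, .pL, .letter β⟩) .qstar
  | doubleWEnd (α : Γ) : LTrans Γ n (.qa α) (.recv ⟨.pW, .pL, .endm⟩) .qstar
  | afterEndW (α : Γ) : LTrans Γ n .qe (.recv ⟨.pW, .pL, .letter α⟩) .qstar
  | afterEndW' (α : Γ) : LTrans Γ n .qe (.recv ⟨.pW', .pL, .letter α⟩) .qstar
  | sinkWLetter (α : Γ) : LTrans Γ n .qstar (.recv ⟨.pW, .pL, .letter α⟩) .qstar
  | sinkW'Letter (α : Γ) : LTrans Γ n .qstar (.recv ⟨.pW', .pL, .letter α⟩) .qstar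
  | sinkWEnd : LTrans Γ n .qstar (.recv ⟨.pW, .pL, .endm⟩) .qstar
  | sinkW'End : LTrans Γ n .qstar (.recv ⟨.pW', .pL, .endm⟩) .qstar
  | endW : LTrans Γ n .q0 (.recv ⟨.pW, .pL, .endm⟩) .qe
  | endW' : LTrans Γ n .qe (.recv ⟨.pW', .pL, .endm⟩) .qe'
  | sendOk : LTrans Γ n .qe' (.send ⟨.pL, .pI, .ok⟩) .qok

def EncState (Γ : Type) (n : ℕ) : PPart → Type
  | .pI => SI n
  | .pW => SW n
  | .pW' => SW n
  | .pL => SL Γ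

/-- The mailbox encoding `Enc(W, W')` of a PCP instance `(ws, ws')`. -/
def Enc (Γ : Type) (n : ℕ) (ws ws' : Fin n → List Γ) : Network PPart (Pay Γ n) where
  State := EncState Γ n
  init := fun p => match p with
    | .pI => SI.q0
    | .pW => SW.q0
    | .pW' => SW.q0
    | .pL => SL.q0
  trans := fun p => match p with
    | .pI => fun s a s' => ITrans Γ n s a s'
    | .pW => fun s a s' => WTrans Γ n .pW ws s a s'
    | .pW' => fun s a s' => WTrans Γ n .pW' ws' s a s'
    | .pL => fun s a s' => LTrans Γ n s a s'
  final := fun p => match p with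
    | .pI => {SI.qd'}
    | .pW => {SW.qe}
    | .pW' => {SW.qe}
    | .pL => {SL.qok}
  Msgs := {m | (∃ i : Fin n, m = ⟨.pI, .pW, .idx i⟩ ∨ m = ⟨.pI, .pW', .idx i⟩) ∨
               (∃ α : Γ, m = ⟨.pW, .pL, .letter α⟩ ∨ m = ⟨.pW', .pL, .letter α⟩) ∨
               m = ⟨.pI, .pW, .dollar⟩ ∨ m = ⟨.pI, .pW', .dollar⟩ ∨
               m = ⟨.pW, .pL, .endm⟩ ∨ m = ⟨.pW', .pL, .endm⟩ ∨ m = ⟨.pL, .pI, .ok⟩}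

/-- A solution of the PCP instance : a nonempty sequence of indices on which the
concatenations of the corresponding words coincide. -/
def PCPSolution {Γ : Type} {n : ℕ} (ws ws' : Fin n → List Γ) : Prop :=
  ∃ is : List (Fin n), is ≠ [] ∧ (is.map ws).flatten = (is.map ws').flatten


/-!
A solution `is` is played out as follows: `A_I` posts all indices and both `$` markers, then
`A_W` and `A_W'` emit their letters in strict alternation, so that the single mailbox of `A_L`
holds `W α₁, W' α₁, W α₂, W' α₂, …, W end, W' end`, and finally `A_L` consumes that mailbox.
This needs the words to be nonempty: `A_W` is stuck in `mid i 0` when the `i`-th word is empty.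

Conversely, in an accepting execution every automaton follows an accepting local run, so `A_I`
sends `is ++ [$]`, `A_W` and `A_W'` receive index sequences and emit the corresponding
concatenations, and `A_L` receives the same letters `βs` from both. Mailboxes are FIFO, so what a
participant receives from a given sender is a prefix of what that sender sent to it; the markers
`$` and `end` come last on both sides, so these prefixes are equalities, and `is` is a solution.
-/

theorem eq_of_map_append_singleton_prefix {α β : Type*} {f : α → β} (hf : f.Injective) {d : β}
    (hd : ∀ a, f a ≠ d) {xs ys : List α} (h : xs.map f ++ [d] <+: ys.map f ++ [d]) : xs = ys := by
  induction xs generalizing ys with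
  | nil =>
    cases ys with
    | nil => rfl
    | cons y ys => exact absurd (List.cons_prefix_cons.1 h).1.symm (hd y)
  | cons x xs ih =>
    cases ys with
    | nil => exact absurd (List.cons_prefix_cons.1 h).1 (hd x)
    | cons y ys =>
      obtain ⟨hxy, h⟩ := List.cons_prefix_cons.1 h
      rw [hf hxy, ih h]

theorem flatten_zipWith_pair {α β : Type*} (f g : α → β) (l : List α) (a b : β) :
    (List.zipWith (fun x y => [x, y]) (l.map f ++ [a]) (l.map g ++ [b])).flatten =
      l.flatMap (fun x => [f x, g x]) ++ [a, b] := by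
  rw [List.zipWith_append (by simp)]
  simp [List.zipWith_map, List.zipWith_self, List.flatMap_def]

section Words

variable {P A α : Type}

@[simp] theorem Act.msg_send (m : Msg P A) : (Act.send m).msg = m := rfl
@[simp] theorem Act.msg_recv (m : Msg P A) : (Act.recv m).msg = m := rfl
@[simp] theorem Act.isSend_send (m : Msg P A) : (Act.send m).isSend = true := rfl
@[simp] theorem Act.isSend_recv (m : Msg P A) : (Act.recv m).isSend = false := rfl
@[simp] theorem Act.active_send (m : Msg P A) : (Act.send m).active = m.sender := rfl
@[simp] theorem Act.active_recv (m : Msg P A) : (Act.recv m).active = m.receiver := rfl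

theorem Steps.append {C : Type*} {step : C → Act P A → C → Prop} {c c' c'' : C}
    {u v : List (Act P A)} (hu : Steps step c u c') (hv : Steps step c' v c'') :
    Steps step c (u ++ v) c'' := by
  induction hu with
  | nil => exact hv
  | cons hs _ ih => exact .cons hs (ih hv)

theorem Steps.exists_of_append {C : Type*} {step : C → Act P A → C → Prop} {c c'' : C}
    {u v : List (Act P A)} (h : Steps step c (u ++ v) c'') :
    ∃ c', Steps step c u c' ∧ Steps step c' v c'' := by
  induction u generalizing c with
  | nil => exact ⟨c, .nil c, h⟩
  | cons a u ih =>
    obtain _ | ⟨hs, h⟩ := h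
    obtain ⟨c', hu, hv⟩ := ih h
    exact ⟨c', .cons hs hu, hv⟩

@[simp] theorem projOut_nil : projOut ([] : List (Act P A)) = [] := rfl

@[simp] theorem projOut_cons (a : Act P A) (w : List (Act P A)) :
    projOut (a :: w) = if a.isSend then a :: projOut w else projOut w :=
  List.filter_cons

@[simp] theorem projOut_append (u v : List (Act P A)) :
    projOut (u ++ v) = projOut u ++ projOut v :=
  List.filter_append _ _

@[simp] theorem projOut_map_send (f : α → Msg P A) (l : List α) :
    projOut (l.map fun x => Act.send (f x)) = l.map fun x => Act.send (f x) := by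
  induction l <;> simp_all

theorem exists_eq_append_send_cons {u : List (Act P A)} (h : projOut u ≠ []) :
    ∃ pre m post, u = pre ++ Act.send m :: post ∧ projOut pre = [] := by
  induction u with
  | nil => exact absurd rfl h
  | cons a u ih =>
    cases a with
    | send m => exact ⟨[], m, u, rfl, rfl⟩
    | recv m =>
      obtain ⟨pre, m', post, rfl, hpre⟩ := ih (by simpa using h)
      exact ⟨.recv m :: pre, m', post, rfl, by simpa using hpre⟩

variable [DecidableEq P]

def sendsTo (p : P) (w : List (Act P A)) : List (Msg P A) :=
  projMsg (w.filter fun a => a.isSend && decide (a.msg.receiver = p))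

def recvsBy (p : P) (w : List (Act P A)) : List (Msg P A) :=
  projMsg (w.filter fun a => !a.isSend && decide (a.msg.receiver = p))

@[simp] theorem sendsTo_nil (p : P) : sendsTo p ([] : List (Act P A)) = [] := rfl

@[simp] theorem recvsBy_nil (p : P) : recvsBy p ([] : List (Act P A)) = [] := rfl

@[simp] theorem sendsTo_cons (p : P) (a : Act P A) (w : List (Act P A)) :
    sendsTo p (a :: w) =
      if a.isSend ∧ a.msg.receiver = p then a.msg :: sendsTo p w else sendsTo p w := by
  simp only [sendsTo, projMsg, List.filter_cons]
  split_ifs <;> simp_all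

@[simp] theorem recvsBy_cons (p : P) (a : Act P A) (w : List (Act P A)) :
    recvsBy p (a :: w) =
      if a.isSend = false ∧ a.msg.receiver = p then a.msg :: recvsBy p w else recvsBy p w := by
  simp only [recvsBy, projMsg, List.filter_cons]
  split_ifs <;> simp_all

@[simp] theorem sendsTo_append (p : P) (u v : List (Act P A)) :
    sendsTo p (u ++ v) = sendsTo p u ++ sendsTo p v := by
  simp [sendsTo, projMsg]

@[simp] theorem recvsBy_append (p : P) (u v : List (Act P A)) :
    recvsBy p (u ++ v) = recvsBy p u ++ recvsBy p v := by
  simp [recvsBy, projMsg]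

@[simp] theorem recvsBy_map_send (p : P) (f : α → Msg P A) (l : List α) :
    recvsBy p (l.map fun x => Act.send (f x)) = [] := by
  induction l <;> simp_all

@[simp] theorem sendsTo_map_send (p : P) (f : α → Msg P A) (l : List α) :
    sendsTo p (l.map fun x => Act.send (f x)) = (l.map f).filter (·.receiver = p) := by
  induction l <;> simp_all [List.filter_cons]

theorem sendsTo_eq_projMsg_filter_projOut (p : P) (w : List (Act P A)) :
    sendsTo p w = projMsg ((projOut w).filter (·.msg.receiver = p)) := by
  simp only [sendsTo, projOut, List.filter_filter, Bool.and_comm]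

theorem recvsBy_perm (p : P) {w w' : List (Act P A)} (h : w.Perm w') :
    (recvsBy p w).Perm (recvsBy p w') :=
  (h.filter _).map _

@[simp] theorem projPeer_cons (p : P) (a : Act P A) (w : List (Act P A)) :
    projPeer p (a :: w) = if a.active = p then a :: projPeer p w else projPeer p w := by
  simp only [projPeer, List.filter_cons, decide_eq_true_eq]

theorem recvsBy_projPeer (p : P) (w : List (Act P A)) :
    recvsBy p (projPeer p w) = recvsBy p w := by
  induction w with
  | nil => rfl
  | cons a w ih => cases a <;> simp only [projPeer_cons, recvsBy_cons] <;> split_ifs <;> simp_all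

theorem sendsTo_projPeer (p r : P) (w : List (Act P A)) :
    sendsTo r (projPeer p w) = (sendsTo r w).filter (·.sender = p) := by
  induction w with
  | nil => rfl
  | cons a w ih =>
    cases a <;> simp only [projPeer_cons, sendsTo_cons] <;> split_ifs <;> simp_all

end Words

section MailboxRuns

variable {P A : Type} [DecidableEq P] {N : Network P A}

theorem buf_append_sendsTo_of_mbSteps {c c' : MbConfig N} {w : List (Act P A)}
    (h : Steps (MbStep N) c w c') (p : P) :
    c.buf p ++ sendsTo p w = recvsBy p w ++ c'.buf p := by
  induction h with
  | nil => simp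
  | cons hs _ ih =>
    cases hs with
    | send m s' _ =>
      by_cases hp : m.receiver = p
      · subst hp
        simpa using ih
      · simpa [hp, Function.update_of_ne (Ne.symm hp)] using ih
    | recv m s' rest _ hbuf =>
      by_cases hp : m.receiver = p
      · subst hp
        simpa [hbuf] using ih
      · simpa [hp, Function.update_of_ne (Ne.symm hp)] using ih

theorem recvsBy_prefix_sendsTo {c : MbConfig N} {w : List (Act P A)}
    (h : Steps (MbStep N) (MbInit N) w c) (p : P) : recvsBy p w <+: sendsTo p w :=
  ⟨c.buf p, by simpa [MbInit] using (buf_append_sendsTo_of_mbSteps h p).symm⟩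

theorem recvsBy_filter_prefix_sendsTo_projPeer {c : MbConfig N} {w : List (Act P A)}
    (h : Steps (MbStep N) (MbInit N) w c) (p r : P) :
    (recvsBy r w).filter (·.sender = p) <+: sendsTo r (projPeer p w) :=
  sendsTo_projPeer p r w ▸ (recvsBy_prefix_sendsTo h r).filter _

theorem prefix_buf_of_mbSteps {c c' : MbConfig N} {w : List (Act P A)} {p : P}
    {x : List (Msg P A)} (h : Steps (MbStep N) c w c') (hx : recvsBy p w ++ x <+: c.buf p) :
    x <+: c'.buf p := by
  obtain ⟨t, ht⟩ := hx
  have hbuf := buf_append_sendsTo_of_mbSteps h p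
  rw [← ht, List.append_assoc, List.append_assoc, List.append_cancel_left_eq] at hbuf
  exact ⟨t ++ sendsTo p w, by rw [← hbuf]⟩

theorem trans_steps_projPeer {c c' : MbConfig N} {w : List (Act P A)}
    (h : Steps (MbStep N) c w c') (p : P) :
    Steps (N.trans p) (c.st p) (projPeer p w) (c'.st p) := by
  induction h with
  | nil => exact .nil _
  | cons hs _ ih =>
    cases hs with
    | send m s' htr =>
      by_cases hp : m.sender = p
      · subst hp
        simp only [Function.update_self] at ih
        simpa using Steps.cons htr ih
      · simpa [hp, Function.update_of_ne (Ne.symm hp)] using ih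
    | recv m s' rest htr _ =>
      by_cases hp : m.receiver = p
      · subst hp
        simp only [Function.update_self] at ih
        simpa using Steps.cons htr ih
      · simpa [hp, Function.update_of_ne (Ne.symm hp)] using ih

theorem recvsBy_eq_nil_of_trans_steps (hN : N.WF) {q r : P} {s s' : N.State q}
    {v : List (Act P A)} (hv : Steps (N.trans q) s v s') (hr : r ≠ q) : recvsBy r v = [] := by
  induction hv with
  | nil => rfl
  | @cons _ _ _ a _ htr _ ih =>
    have hact := (hN _ _ _ _ htr).2
    cases a <;> simp_all [Ne.symm hr]

theorem exists_mbSteps_of_trans_steps (hN : N.WF) {p : P} {c : MbConfig N}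
    {u : List (Act P A)} {s : N.State p} (hu : Steps (N.trans p) (c.st p) u s)
    (hbuf : recvsBy p u <+: c.buf p) :
    ∃ c', Steps (MbStep N) c u c' ∧ c'.st = Function.update c.st p s := by
  generalize hs₀ : c.st p = s₀ at hu
  induction hu generalizing c with
  | nil => exact ⟨c, .nil c, by rw [← hs₀, Function.update_eq_self]⟩
  | @cons _ s₁ _ a w htr _ ih =>
    subst hs₀
    have hact : a.active = p := (hN _ _ _ _ htr).2
    cases a with
    | send m =>
      simp only [Act.active_send] at hact
      subst hact
      have hbuf' : recvsBy m.sender w <+: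
          Function.update c.buf m.receiver (c.buf m.receiver ++ [m]) m.sender := by
        by_cases hr : m.receiver = m.sender
        · simpa [hr] using hbuf.trans (List.prefix_append _ _)
        · simpa [Function.update_of_ne (Ne.symm hr), hr] using hbuf
      obtain ⟨c', hsteps, hst⟩ := ih (c := ⟨Function.update c.st m.sender s₁,
        Function.update c.buf m.receiver (c.buf m.receiver ++ [m])⟩) hbuf' (by simp)
      exact ⟨c', .cons (MbStep.send c m s₁ htr) hsteps, by simp [hst, Function.update_idem]⟩
    | recv m =>
      simp only [Act.active_recv] at hact
      subst hact
      obtain ⟨t, ht⟩ := hbuf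
      obtain ⟨c', hsteps, hst⟩ := ih (c := ⟨Function.update c.st m.receiver s₁,
        Function.update c.buf m.receiver (recvsBy m.receiver w ++ t)⟩) (by simp) (by simp)
      refine ⟨c', .cons (MbStep.recv c m s₁ _ htr ?_) hsteps, by simp [hst, Function.update_idem]⟩
      simpa using ht.symm

theorem exists_mbSteps_interleave (hN : N.WF) {p q : P} (hpq : p ≠ q) {c : MbConfig N}
    {u v : List (Act P A)} {sp : N.State p} {sq : N.State q}
    (hu : Steps (N.trans p) (c.st p) u sp) (hv : Steps (N.trans q) (c.st q) v sq)
    (hbu : recvsBy p u <+: c.buf p) (hbv : recvsBy q v <+: c.buf q)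
    (hlen : (projOut u).length = (projOut v).length) :
    ∃ w c', Steps (MbStep N) c w c' ∧
      c'.st = Function.update (Function.update c.st p sp) q sq ∧ w.Perm (u ++ v) ∧
      projOut w = (List.zipWith (fun x y => [x, y]) (projOut u) (projOut v)).flatten := by
  induction hk : (projOut u).length generalizing c u v with
  | zero =>
    have hu₀ : projOut u = [] := List.length_eq_zero_iff.1 hk
    have hv₀ : projOut v = [] := List.length_eq_zero_iff.1 (hlen ▸ hk)
    obtain ⟨c₁, h₁, hst₁⟩ := exists_mbSteps_of_trans_steps hN hu hbu
    have hv₁ : Steps (N.trans q) (c₁.st q) v sq := by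
      rwa [hst₁, Function.update_of_ne hpq.symm]
    have hbv₁ : recvsBy q v <+: c₁.buf q := prefix_buf_of_mbSteps h₁ (by
      rwa [recvsBy_eq_nil_of_trans_steps hN hu hpq.symm, List.nil_append])
    obtain ⟨c₂, h₂, hst₂⟩ := exists_mbSteps_of_trans_steps hN hv₁ hbv₁
    exact ⟨u ++ v, c₂, h₁.append h₂, by rw [hst₂, hst₁], .refl _, by simp [hu₀, hv₀]⟩
  | succ k ih =>
    obtain ⟨pu, x, u', rfl, hpu⟩ := exists_eq_append_send_cons (u := u)
      (fun h => by simp [h] at hk)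
    obtain ⟨pv, y, v', rfl, hpv⟩ := exists_eq_append_send_cons (u := v)
      (fun h => by simp [h] at hlen)
    obtain ⟨s₁, hu₁, hu'⟩ := Steps.exists_of_append (u := pu ++ [.send x]) (by simpa using hu)
    obtain ⟨t₁, hv₁, hv'⟩ := Steps.exists_of_append (u := pv ++ [.send y]) (by simpa using hv)
    have hbu' : recvsBy p (pu ++ [.send x]) ++ recvsBy p u' <+: c.buf p := by simpa using hbu
    have hbv' : recvsBy q (pv ++ [.send y]) ++ recvsBy q v' <+: c.buf q := by simpa using hbv
    obtain ⟨c₁, h₁, hst₁⟩ :=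
      exists_mbSteps_of_trans_steps hN hu₁ ((List.prefix_append _ _).trans hbu')
    have hv₁' : Steps (N.trans q) (c₁.st q) (pv ++ [.send y]) t₁ := by
      rwa [hst₁, Function.update_of_ne hpq.symm]
    have hbv₁ : recvsBy q (pv ++ [.send y]) ++ recvsBy q v' <+: c₁.buf q :=
      prefix_buf_of_mbSteps h₁ (by
        rwa [recvsBy_eq_nil_of_trans_steps hN hu₁ hpq.symm, List.nil_append])
    obtain ⟨c₂, h₂, hst₂⟩ :=
      exists_mbSteps_of_trans_steps hN hv₁' ((List.prefix_append _ _).trans hbv₁)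
    have hu₂ : Steps (N.trans p) (c₂.st p) u' sp := by
      rwa [hst₂, Function.update_of_ne hpq, hst₁, Function.update_self]
    have hv₂ : Steps (N.trans q) (c₂.st q) v' sq := by
      rwa [hst₂, Function.update_self]
    have hbu₂ : recvsBy p u' <+: c₂.buf p := prefix_buf_of_mbSteps h₂ (by
      rw [recvsBy_eq_nil_of_trans_steps hN hv₁ hpq, List.nil_append]
      exact prefix_buf_of_mbSteps h₁ hbu')
    obtain ⟨w', c', h', hst', hperm, hout⟩ :=
      ih hu₂ hv₂ hbu₂ (prefix_buf_of_mbSteps h₂ hbv₁) (by simpa [hpu, hpv] using hlen)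
        (by simpa [hpu] using hk)
    refine ⟨(pu ++ [.send x]) ++ ((pv ++ [.send y]) ++ w'), c', h₁.append (h₂.append h'), ?_,
      ?_, by simp [hpu, hpv, hout]⟩
    · rw [hst', hst₂, hst₁, Function.update_comm hpq s₁ t₁, Function.update_idem,
        ← Function.update_comm hpq, Function.update_idem]
    · have hcomm := (List.perm_append_comm_assoc (pv ++ [.send y]) u' v').append_left
        (pu ++ [.send x])
      simpa using (hperm.append_left _).append_left _ |>.trans hcomm

end MailboxRuns

section EncodingRuns

variable {Γ : Type} {n : ℕ}

theorem enc_wf (ws ws' : Fin n → List Γ) : (Enc Γ n ws ws').WF := by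
  intro p s a s' h
  cases p <;> cases h <;> simp [Enc]

def wordI (is : List (Fin n)) : List (Act PPart (Pay Γ n)) :=
  is.flatMap (fun i => [.send ⟨.pI, .pW, .idx i⟩, .send ⟨.pI, .pW', .idx i⟩]) ++
    [.send ⟨.pI, .pW, .dollar⟩, .send ⟨.pI, .pW', .dollar⟩]

def wordW (self : PPart) (vs : Fin n → List Γ) (js : List (Fin n)) :
    List (Act PPart (Pay Γ n)) :=
  js.flatMap (fun j =>
      .recv ⟨.pI, self, .idx j⟩ :: (vs j).map fun α => .send ⟨self, .pL, .letter α⟩) ++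
    [.recv ⟨.pI, self, .dollar⟩, .send ⟨self, .pL, .endm⟩]

def wordL (βs : List Γ) : List (Act PPart (Pay Γ n)) :=
  βs.flatMap (fun β => [.recv ⟨.pW, .pL, .letter β⟩, .recv ⟨.pW', .pL, .letter β⟩]) ++
    [.recv ⟨.pW, .pL, .endm⟩, .recv ⟨.pW', .pL, .endm⟩, .send ⟨.pL, .pI, .ok⟩]

theorem wordW_cons (self : PPart) (vs : Fin n → List Γ) (j : Fin n) (js : List (Fin n)) :
    wordW self vs (j :: js) = .recv ⟨.pI, self, .idx j⟩ ::
      ((vs j).map (fun α => .send ⟨self, .pL, .letter α⟩) ++ wordW self vs js) := by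
  simp [wordW]

def residualI : SI n → Set (List (Act PPart (Pay Γ n)))
  | .q0 => {u | ∃ is, u = wordI is}
  | .qi i => {u | ∃ is, u = .send ⟨.pI, .pW', .idx i⟩ :: wordI is}
  | .qd => {[.send ⟨.pI, .pW', .dollar⟩]}
  | .qd' => {[]}

def residualW (self : PPart) (vs : Fin n → List Γ) : SW n → Set (List (Act PPart (Pay Γ n)))
  | .q0 => {u | ∃ js, js ≠ [] ∧ u = wordW self vs js}
  | .mid i j => {u | ∃ js,
      u = ((vs i).drop j).map (fun α => .send ⟨self, .pL, .letter α⟩) ++ wordW self vs js}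
  | .qf => {u | ∃ js, u = wordW self vs js}
  | .qd => {[.send ⟨self, .pL, .endm⟩]}
  | .qe => {[]}

def residualL : SL Γ → Set (List (Act PPart (Pay Γ n)))
  | .q0 => {u | ∃ βs, u = wordL βs}
  | .qa α => {u | ∃ βs, u = .recv ⟨.pW', .pL, .letter α⟩ :: wordL βs}
  | .qe => {[.recv ⟨.pW', .pL, .endm⟩, .send ⟨.pL, .pI, .ok⟩]}
  | .qe' => {[.send ⟨.pL, .pI, .ok⟩]}
  | .qok => {[]}
  | .qstar => ∅

theorem mem_residualI_of_steps {s : SI n} {u : List (Act PPart (Pay Γ n))}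
    (h : Steps (ITrans Γ n) s u .qd') : u ∈ residualI s := by
  generalize hf : SI.qd' = t at h
  induction h with
  | nil => subst hf; rfl
  | cons htr _ ih =>
    have ih := ih hf
    cases htr with
    | sendW i => obtain ⟨is, rfl⟩ := ih; exact ⟨i :: is, by simp [wordI]⟩
    | sendW' i => obtain ⟨is, rfl⟩ := ih; exact ⟨is, rfl⟩
    | dollarW => obtain rfl := ih; exact ⟨[], rfl⟩
    | dollarW' => obtain rfl := ih; rfl

theorem mem_residualW_of_steps {self : PPart} {vs : Fin n → List Γ} {s : SW n}
    {u : List (Act PPart (Pay Γ n))} (h : Steps (WTrans Γ n self vs) s u .qe) :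
    u ∈ residualW self vs s := by
  generalize hf : SW.qe = t at h
  induction h with
  | nil => subst hf; rfl
  | cons htr _ ih =>
    have ih := ih hf
    cases htr with
    | start i => obtain ⟨js, rfl⟩ := ih; exact ⟨i :: js, by simp, by simp [wordW_cons]⟩
    | again i => obtain ⟨js, rfl⟩ := ih; exact ⟨i :: js, by simp [wordW_cons]⟩
    | step i j hj =>
      obtain ⟨js, rfl⟩ := ih
      refine ⟨js, ?_⟩
      rw [List.drop_eq_getElem_cons (Nat.lt_of_succ_lt hj)]
      simp only [List.map_cons, List.cons_append, List.get_eq_getElem]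
    | last i j hj =>
      obtain ⟨js, rfl⟩ := ih
      refine ⟨js, ?_⟩
      rw [List.drop_eq_getElem_cons ((Nat.lt_succ_self j).trans_eq hj),
        List.drop_eq_nil_of_le hj.ge]
      simp only [List.map_cons, List.map_nil, List.cons_append, List.nil_append,
        List.get_eq_getElem]
    | dollar => obtain rfl := ih; exact ⟨[], rfl⟩
    | sendEnd => obtain rfl := ih; rfl

theorem mem_residualL_of_steps {s : SL Γ} {u : List (Act PPart (Pay Γ n))}
    (h : Steps (LTrans Γ n) s u .qok) : u ∈ residualL s := by
  generalize hf : SL.qok = t at h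
  induction h with
  | nil => subst hf; rfl
  | cons htr _ ih =>
    have ih := ih hf
    cases htr with
    | getW α => obtain ⟨βs, rfl⟩ := ih; exact ⟨α :: βs, by simp [wordL]⟩
    | matchW' α => obtain ⟨βs, rfl⟩ := ih; exact ⟨βs, rfl⟩
    | endW => obtain rfl := ih; exact ⟨[], rfl⟩
    | endW' => obtain rfl := ih; rfl
    | sendOk => obtain rfl := ih; rfl
    | _ => exact ih.elim

theorem steps_wordI (is : List (Fin n)) : Steps (ITrans Γ n) .q0 (wordI is) .qd' := by
  induction is with
  | nil => exact .cons .dollarW (.cons .dollarW' (.nil _))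
  | cons i is ih => exact .cons (.sendW i) (.cons (.sendW' i) ih)

theorem steps_mid_drop (self : PPart) (vs : Fin n → List Γ) (i : Fin n) {j : ℕ}
    (hj : j < (vs i).length) :
    Steps (WTrans Γ n self vs) (.mid i j)
      (((vs i).drop j).map fun α => .send ⟨self, .pL, .letter α⟩) .qf := by
  obtain ⟨k, hk⟩ : ∃ k, (vs i).length = j + k + 1 := ⟨(vs i).length - j - 1, by omega⟩
  induction k generalizing j with
  | zero =>
    rw [List.drop_eq_getElem_cons hj, List.drop_eq_nil_of_le (by omega)]
    exact .cons (.last i j (by omega)) (.nil _)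
  | succ k ih =>
    rw [List.drop_eq_getElem_cons hj]
    exact .cons (.step i j (by omega)) (ih (by omega) (by omega))

theorem steps_wordW_of_qf (self : PPart) {vs : Fin n → List Γ} (hvs : ∀ j, vs j ≠ [])
    (js : List (Fin n)) : Steps (WTrans Γ n self vs) .qf (wordW self vs js) .qe := by
  induction js with
  | nil => exact .cons .dollar (.cons .sendEnd (.nil _))
  | cons j js ih =>
    have hj := steps_mid_drop self vs j (List.length_pos_of_ne_nil (hvs j))
    rw [List.drop_zero] at hj
    rw [wordW_cons]
    exact .cons (.again j) (hj.append ih)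

theorem steps_wordW (self : PPart) {vs : Fin n → List Γ} (hvs : ∀ j, vs j ≠ [])
    {js : List (Fin n)} (hjs : js ≠ []) :
    Steps (WTrans Γ n self vs) .q0 (wordW self vs js) .qe := by
  obtain ⟨j, js, rfl⟩ := List.exists_cons_of_ne_nil hjs
  have hj := steps_mid_drop self vs j (List.length_pos_of_ne_nil (hvs j))
  rw [List.drop_zero] at hj
  rw [wordW_cons]
  exact .cons (.start j) (hj.append (steps_wordW_of_qf self hvs js))

theorem steps_wordL (βs : List Γ) : Steps (LTrans Γ n) .q0 (wordL βs) .qok := by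
  induction βs with
  | nil => exact .cons .endW (.cons .endW' (.cons .sendOk (.nil _)))
  | cons β βs ih => exact .cons (.getW β) (.cons (.matchW' β) ih)

end EncodingRuns

section EncodingMessages

variable {Γ : Type} {n : ℕ}

@[simp] theorem recvsBy_wordI (r : PPart) (is : List (Fin n)) :
    recvsBy r (wordI (Γ := Γ) is) = [] := by
  induction is with
  | nil => simp [wordI]
  | cons i is ih => simpa [wordI] using ih

theorem sendsTo_wordI (r : PPart) (is : List (Fin n)) :
    sendsTo r (wordI (Γ := Γ) is) = if r = .pW ∨ r = .pW' then
      is.map (fun i => ⟨.pI, r, .idx i⟩) ++ [⟨.pI, r, .dollar⟩] else [] := by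
  induction is with
  | nil => cases r <;> simp [wordI]
  | cons i is ih => cases r <;> simp_all [wordI]

@[simp] theorem recvsBy_wordW (self : PPart) (vs : Fin n → List Γ) (js : List (Fin n)) :
    recvsBy self (wordW self vs js) =
      js.map (fun j => ⟨.pI, self, .idx j⟩) ++ [⟨.pI, self, .dollar⟩] := by
  induction js with
  | nil => simp [wordW]
  | cons j js ih => simp [wordW_cons, ih]

theorem recvsBy_wordW_of_ne {r self : PPart} (hr : r ≠ self) (vs : Fin n → List Γ)
    (js : List (Fin n)) : recvsBy r (wordW self vs js) = [] := by
  induction js with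
  | nil => simp [wordW, Ne.symm hr]
  | cons j js ih => simp [wordW_cons, ih, Ne.symm hr]

@[simp] theorem sendsTo_wordW (self : PPart) (vs : Fin n → List Γ) (js : List (Fin n)) :
    sendsTo .pL (wordW self vs js) =
      (js.map vs).flatten.map (fun α => ⟨self, .pL, .letter α⟩) ++ [⟨self, .pL, .endm⟩] := by
  induction js with
  | nil => simp [wordW]
  | cons j js ih => simp [wordW_cons, ih]

@[simp] theorem projOut_wordW (self : PPart) (vs : Fin n → List Γ) (js : List (Fin n)) :
    projOut (wordW self vs js) =
      (js.map vs).flatten.map (fun α => .send ⟨self, .pL, .letter α⟩) ++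
        [.send ⟨self, .pL, .endm⟩] := by
  induction js with
  | nil => simp [wordW]
  | cons j js ih => simp [wordW_cons, ih]

@[simp] theorem recvsBy_wordL (βs : List Γ) :
    recvsBy .pL (wordL (n := n) βs) =
      βs.flatMap (fun β => [⟨.pW, .pL, .letter β⟩, ⟨.pW', .pL, .letter β⟩]) ++
        [⟨.pW, .pL, .endm⟩, ⟨.pW', .pL, .endm⟩] := by
  induction βs with
  | nil => simp [wordL]
  | cons β βs ih => simpa [wordL] using ih

end EncodingMessages

section Correctness

variable {Γ : Type} {n : ℕ} {ws ws' : Fin n → List Γ}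

theorem indices_eq_of_mbSteps {self : PPart} (hself : self = .pW ∨ self = .pW')
    {vs : Fin n → List Γ} {w : List (Act PPart (Pay Γ n))} {c : MbConfig (Enc Γ n ws ws')}
    (h : Steps (MbStep _) (MbInit _) w c) {is js : List (Fin n)}
    (hI : projPeer .pI w = wordI is) (hW : projPeer self w = wordW self vs js) : js = is := by
  have hfifo := recvsBy_filter_prefix_sendsTo_projPeer h .pI self
  rw [← recvsBy_projPeer, hW, hI, sendsTo_wordI, if_pos hself] at hfifo
  refine eq_of_map_append_singleton_prefix
    (f := fun i => (⟨.pI, self, .idx i⟩ : Msg _ (Pay Γ n))) (d := ⟨.pI, self, .dollar⟩)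
    (fun i j h => by simpa using h) (by simp) ?_
  simpa [List.filter_map, Function.comp_def] using hfifo

theorem letters_eq_of_mbSteps {self : PPart} (hself : self = .pW ∨ self = .pW')
    {vs : Fin n → List Γ} {w : List (Act PPart (Pay Γ n))} {c : MbConfig (Enc Γ n ws ws')}
    (h : Steps (MbStep _) (MbInit _) w c) {js : List (Fin n)} {βs : List Γ}
    (hW : projPeer self w = wordW self vs js) (hL : projPeer .pL w = wordL βs) :
    βs = (js.map vs).flatten := by
  have hfifo := recvsBy_filter_prefix_sendsTo_projPeer h self .pL
  rw [← recvsBy_projPeer, hL, hW, recvsBy_wordL, sendsTo_wordW] at hfifo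
  refine eq_of_map_append_singleton_prefix
    (f := fun α => (⟨self, .pL, .letter α⟩ : Msg _ (Pay Γ n))) (d := ⟨self, .pL, .endm⟩)
    (fun a b h => by simpa using h) (by simp) ?_
  rcases hself with rfl | rfl <;>
    simpa [List.filter_flatMap, List.filter_cons, ← List.map_eq_flatMap] using hfifo

theorem pcpSolution_of_mem_mbExecs {w : List (Act PPart (Pay Γ n))}
    (hw : w ∈ MbExecs (Enc Γ n ws ws')) : PCPSolution ws ws' := by
  obtain ⟨c, h, hfin⟩ := hw
  have hrun := trans_steps_projPeer h
  have hI : c.st .pI = SI.qd' := hfin .pI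
  have hW : c.st .pW = SW.qe := hfin .pW
  have hW' : c.st .pW' = SW.qe := hfin .pW'
  have hL : c.st .pL = SL.qok := hfin .pL
  obtain ⟨is, hI⟩ := mem_residualI_of_steps (hI ▸ hrun .pI)
  obtain ⟨js, hjs, hW⟩ := mem_residualW_of_steps (hW ▸ hrun .pW)
  obtain ⟨ks, -, hW'⟩ := mem_residualW_of_steps (hW' ▸ hrun .pW')
  obtain ⟨βs, hL⟩ := mem_residualL_of_steps (hL ▸ hrun .pL)
  have hji := indices_eq_of_mbSteps (.inl rfl) h hI hW
  have hki := indices_eq_of_mbSteps (.inr rfl) h hI hW'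
  refine ⟨is, hji ▸ hjs, ?_⟩
  rw [← hji, ← letters_eq_of_mbSteps (.inl rfl) h hW hL, letters_eq_of_mbSteps (.inr rfl) h hW' hL,
    hki, hji]

theorem mbExecs_nonempty_of_pcpSolution (hne : ∀ i, ws i ≠ []) (hne' : ∀ i, ws' i ≠ [])
    (h : PCPSolution ws ws') : (MbExecs (Enc Γ n ws ws')).Nonempty := by
  obtain ⟨is, his, heq⟩ := h
  have hN := enc_wf ws ws'
  obtain ⟨c₁, h₁, hst₁⟩ := exists_mbSteps_of_trans_steps hN (p := .pI) (c := MbInit _)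
    (steps_wordI is) (by simp)
  have hidx : ∀ self, self = .pW ∨ self = .pW' → ∀ vs : Fin n → List Γ,
      recvsBy self (wordW self vs is) <+: c₁.buf self := by
    intro self hself vs
    have hbuf := buf_append_sendsTo_of_mbSteps h₁ self
    simp only [MbInit, sendsTo_wordI, if_pos hself, recvsBy_wordI, List.nil_append] at hbuf
    rw [recvsBy_wordW, hbuf]
  obtain ⟨w₂, c₂, h₂, hst₂, hperm, hout⟩ := exists_mbSteps_interleave hN (p := .pW) (q := .pW')
    (by decide) (u := wordW .pW ws is) (v := wordW .pW' ws' is)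
    (by rw [hst₁]; exact steps_wordW .pW hne his) (by rw [hst₁]; exact steps_wordW .pW' hne' his)
    (hidx .pW (.inl rfl) ws) (hidx .pW' (.inr rfl) ws')
    (by simp only [projOut_wordW, List.length_append, List.length_map, List.length_singleton, heq])
  have hbufL : recvsBy .pL (wordL (is.map ws).flatten) <+: c₂.buf .pL := by
    have hbuf := buf_append_sendsTo_of_mbSteps (h₁.append h₂) .pL
    have hrecv : recvsBy .pL w₂ = [] := by
      refine ((recvsBy_perm .pL hperm).trans ?_).eq_nil
      rw [recvsBy_append, recvsBy_wordW_of_ne (by decide), recvsBy_wordW_of_ne (by decide)]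
      rfl
    rw [sendsTo_append, recvsBy_append, hrecv, sendsTo_eq_projMsg_filter_projOut .pL w₂, hout,
      projOut_wordW, projOut_wordW, ← heq, flatten_zipWith_pair] at hbuf
    have hL : c₂.buf .pL = recvsBy .pL (wordL (is.map ws).flatten) := by
      simpa [MbInit, sendsTo_wordI, projMsg, List.filter_flatMap, List.map_flatMap] using hbuf.symm
    exact hL ▸ List.prefix_refl _
  obtain ⟨c₃, h₃, hst₃⟩ := exists_mbSteps_of_trans_steps hN (p := .pL) (c := c₂)
    (by rw [hst₂, hst₁]; exact steps_wordL _) hbufL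
  exact ⟨_, c₃, (h₁.append h₂).append h₃, by intro p; rw [hst₃, hst₂, hst₁]; cases p <;> rfl⟩

end Correctness

theorem pcp_solution_iff_mb_traces_nonempty_general (Γ : Type)
    (n : ℕ) (ws ws' : Fin n → List Γ)
    (hne : ∀ i, ws i ≠ []) (hne' : ∀ i, ws' i ≠ []) :
    PCPSolution ws ws' ↔ MbTraces (Enc Γ n ws ws') ≠ ∅ := by
  rw [MbTraces, Ne, Set.image_eq_empty, ← Ne, ← Set.nonempty_iff_ne_empty]
  exact ⟨mbExecs_nonempty_of_pcpSolution hne hne', fun ⟨_, hw⟩ => pcpSolution_of_mem_mbExecs hw⟩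

/-- a PCP instance has a solution iff the mailbox trace set of its encoding
is nonempty. -/
theorem pcp_solution_iff_mb_traces_nonempty (Γ : Type) (a b : Γ) (hab : a ≠ b)
    (n : ℕ) (ws ws' : Fin n → List Γ)
    (hne : ∀ i, ws i ≠ []) (hne' : ∀ i, ws' i ≠ []) :
    PCPSolution ws ws' ↔ MbTraces (Enc Γ n ws ws') ≠ ∅ :=
  pcp_solution_iff_mb_traces_nonempty_general Γ n ws ws' hne hne'
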